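/- arXiv:2101.11766 — 3 statements merged into one kernel-verified Lean document; each statement's English description precedes it below -/
import Mathlib

section
/- Let E be a real normed vector space, F a real normed vector space, S a subset of E, and let w_1, ..., w_n : E → ℝ (n ≥ 1) be functions each Lipschitz with constant L ≥ 0, satisfying w_i(x) ≥ m for all x ∈ S and all i, where m > 0. Let y_1, ..., y_n ∈ F satisfy ‖y_i‖ ≤ C for all i. Define f(x) = (Σ_{i=1}^n w_i(x)·y_i) / (Σ_{i=1}^n w_i(x)). Then for all a, b ∈ S, ‖f(a) − f(b)‖ ≤ (2·C·L/m)·‖a − b‖. -/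
/-- Deterministic core of the paper's Theorem 1 (fixed neighborhood case):
the weighted average `f x = (∑ i, w i x • y i) / (∑ i, w i x)` with weights
Lipschitz with constant `L` and bounded below by `m > 0` on `S`, and embeddings
bounded by `C`, is Lipschitz on `S` with constant `2·C·L/m`. -/
theorem weighted_average_lipschitz
    {E F : Type*} [NormedAddCommGroup E] [NormedSpace ℝ E]
    [NormedAddCommGroup F] [NormedSpace ℝ F]
    (S : Set E) (n : ℕ) (hn : 1 ≤ n)
    (w : Fin n → E → ℝ) (L : ℝ) (hL : 0 ≤ L)
    (hlip : ∀ i, ∀ a b : E, |w i a - w i b| ≤ L * ‖a - b‖)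
    (m : ℝ) (hm : 0 < m)
    (hlow : ∀ i, ∀ x ∈ S, m ≤ w i x)
    (y : Fin n → F) (C : ℝ) (hy : ∀ i, ‖y i‖ ≤ C)
    (f : E → F)
    (hf : ∀ x, f x = (∑ i, w i x)⁻¹ • (∑ i, w i x • y i)) :
    ∀ a ∈ S, ∀ b ∈ S, ‖f a - f b‖ ≤ (2 * C * L / m) * ‖a - b‖ := by
  intro a ha b hb
  have hn0 : (0:ℝ) < n := by exact_mod_cast hn
  have hC : 0 ≤ C := le_trans (norm_nonneg _) (hy ⟨0, hn⟩)
  set Wa := ∑ i, w i a with hWa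
  set Wb := ∑ i, w i b with hWb
  have hWam : (n:ℝ) * m ≤ Wa := by
    calc (n:ℝ) * m = ∑ _i : Fin n, m := by simp [mul_comm]
    _ ≤ Wa := Finset.sum_le_sum fun i _ => hlow i a ha
  have hWbm : (n:ℝ) * m ≤ Wb := by
    calc (n:ℝ) * m = ∑ _i : Fin n, m := by simp [mul_comm]
    _ ≤ Wb := Finset.sum_le_sum fun i _ => hlow i b hb
  have hWa0 : 0 < Wa := lt_of_lt_of_le (by positivity) hWam
  have hWb0 : 0 < Wb := lt_of_lt_of_le (by positivity) hWbm
  have key : f a - f b =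
      Wa⁻¹ • (∑ i, (w i a - w i b) • y i) + (Wa⁻¹ - Wb⁻¹) • (∑ i, w i b • y i) := by
    simp only [hf, sub_smul, smul_sub, Finset.smul_sum, Finset.sum_sub_distrib]
    abel
  have h1 : ‖∑ i, (w i a - w i b) • y i‖ ≤ (n : ℝ) * (L * ‖a - b‖) * C := by
    calc ‖∑ i, (w i a - w i b) • y i‖ ≤ ∑ i, ‖(w i a - w i b) • y i‖ := norm_sum_le _ _
    _ ≤ ∑ _i : Fin n, (L * ‖a - b‖) * C := by
        refine Finset.sum_le_sum fun i _ => ?_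
        rw [norm_smul, Real.norm_eq_abs]
        exact mul_le_mul (hlip i a b) (hy i) (norm_nonneg _) (by positivity)
    _ = (n : ℝ) * (L * ‖a - b‖) * C := by
        rw [Finset.sum_const]; simp [mul_assoc]
  have h2 : ‖∑ i, w i b • y i‖ ≤ Wb * C := by
    calc ‖∑ i, w i b • y i‖ ≤ ∑ i, ‖w i b • y i‖ := norm_sum_le _ _
    _ ≤ ∑ i, w i b * C := by
        refine Finset.sum_le_sum fun i _ => ?_
        rw [norm_smul, Real.norm_eq_abs, abs_of_pos (lt_of_lt_of_le hm (hlow i b hb))]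
        exact mul_le_mul_of_nonneg_left (hy i) (le_of_lt (lt_of_lt_of_le hm (hlow i b hb)))
    _ = Wb * C := by rw [← Finset.sum_mul]
  have h3 : |Wb - Wa| ≤ (n : ℝ) * (L * ‖a - b‖) := by
    calc |Wb - Wa| = |∑ i, (w i b - w i a)| := by rw [Finset.sum_sub_distrib]
    _ ≤ ∑ i, |w i b - w i a| := Finset.abs_sum_le_sum_abs _ _
    _ ≤ ∑ _i : Fin n, L * ‖a - b‖ := by
        refine Finset.sum_le_sum fun i _ => ?_
        rw [norm_sub_rev]; exact hlip i b a
    _ = (n : ℝ) * (L * ‖a - b‖) := by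
        rw [Finset.sum_const, Finset.card_univ, Fintype.card_fin, nsmul_eq_mul]
  have hinv : |Wa⁻¹ - Wb⁻¹| ≤ (n : ℝ) * (L * ‖a - b‖) / (Wa * Wb) := by
    have : Wa⁻¹ - Wb⁻¹ = (Wb - Wa) / (Wa * Wb) := by field_simp
    rw [this, abs_div, abs_of_pos (mul_pos hWa0 hWb0)]
    gcongr
  have hbound : ‖f a - f b‖ ≤
      Wa⁻¹ * ((n : ℝ) * (L * ‖a - b‖) * C) +
      ((n : ℝ) * (L * ‖a - b‖) / (Wa * Wb)) * (Wb * C) := by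
    rw [key]
    calc ‖_ + _‖ ≤ ‖Wa⁻¹ • (∑ i, (w i a - w i b) • y i)‖ + ‖(Wa⁻¹ - Wb⁻¹) • (∑ i, w i b • y i)‖ :=
        norm_add_le _ _
    _ ≤ Wa⁻¹ * ((n : ℝ) * (L * ‖a - b‖) * C) +
        ((n : ℝ) * (L * ‖a - b‖) / (Wa * Wb)) * (Wb * C) := by
        gcongr
        · rw [norm_smul, Real.norm_eq_abs, abs_of_pos (inv_pos.mpr hWa0)]
          exact mul_le_mul_of_nonneg_left h1 (le_of_lt (inv_pos.mpr hWa0))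
        · rw [norm_smul, Real.norm_eq_abs]
          exact mul_le_mul hinv h2 (norm_nonneg _) (by positivity)
  have heq : Wa⁻¹ * ((n : ℝ) * (L * ‖a - b‖) * C) +
      ((n : ℝ) * (L * ‖a - b‖) / (Wa * Wb)) * (Wb * C)
      = 2 * ((n : ℝ) * (L * ‖a - b‖) * C) / Wa := by
    field_simp
    ring
  rw [heq] at hbound
  refine hbound.trans ?_
  rw [div_le_iff₀ hWa0]
  have h4 : (2 * C * L / m) * ‖a - b‖ * ((n:ℝ) * m) ≤ (2 * C * L / m) * ‖a - b‖ * Wa := by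
    have hcoef : 0 ≤ (2 * C * L / m) * ‖a - b‖ := by positivity
    exact mul_le_mul_of_nonneg_left hWam hcoef
  refine le_trans (le_of_eq ?_) h4
  field_simp
end

section
/- Let E be a real normed vector space and F a real normed vector space, let x_1, ..., x_n ∈ E (n ≥ 1) and y_1, ..., y_n ∈ F with ‖y_i‖ ≤ C for all i, and let r > 0. Define w_i(x) = exp(−‖x − x_i‖) and f(x) = (Σ_{i=1}^n w_i(x)·y_i)/(Σ_{i=1}^n w_i(x)). Let S = {x ∈ E : ‖x − x_i‖ ≤ r for all i}. Then for all a, b ∈ S, ‖f(a) − f(b)‖ ≤ 2·C·exp(r)·‖a − b‖. -/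
lemma exp_neg_lip_aux (s t : ℝ) (hs : 0 ≤ s) (ht : 0 ≤ t) :
    |Real.exp (-s) - Real.exp (-t)| ≤ |s - t| := by
  wlog h : t ≤ s generalizing s t
  · rw [abs_sub_comm, abs_sub_comm s t]
    exact this t s ht hs (le_of_not_ge h)
  have h1 : Real.exp (-s) ≤ Real.exp (-t) := Real.exp_le_exp.2 (by linarith)
  rw [abs_sub_comm, abs_of_nonneg (by linarith), abs_of_nonneg (by linarith)]
  have h2 : Real.exp (-t) - Real.exp (-s) = Real.exp (-t) * (1 - Real.exp (t - s)) := by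
    rw [mul_sub, mul_one, ← Real.exp_add]; ring_nf
  have h3 : Real.exp (-t) ≤ 1 := Real.exp_le_one_iff.2 (by linarith)
  have h4 : (t - s) + 1 ≤ Real.exp (t - s) := Real.add_one_le_exp _
  have h5 : 0 < Real.exp (-t) := Real.exp_pos _
  nlinarith

/-- Instantiation of the paper's Theorem 1 with the weight function
`h(d) = exp(−d)`: on the region where every reference point is within
distance `r`, the weighted nearest-neighbor interpolation map is Lipschitz
with constant `2·C·exp(r)`. -/
theorem weighted_average_exp_lipschitz
    {E F : Type*} [NormedAddCommGroup E] [NormedSpace ℝ E]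
    [NormedAddCommGroup F] [NormedSpace ℝ F]
    (n : ℕ) (hn : 1 ≤ n)
    (x : Fin n → E) (y : Fin n → F) (C : ℝ) (hy : ∀ i, ‖y i‖ ≤ C)
    (r : ℝ) (hr : 0 < r)
    (w : Fin n → E → ℝ) (hw : ∀ i z, w i z = Real.exp (-‖z - x i‖))
    (f : E → F) (hf : ∀ z, f z = (∑ i, w i z)⁻¹ • (∑ i, w i z • y i))
    (S : Set E) (hS : S = {z : E | ∀ i, ‖z - x i‖ ≤ r}) :
    ∀ a ∈ S, ∀ b ∈ S, ‖f a - f b‖ ≤ 2 * C * Real.exp r * ‖a - b‖ := by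
  intro a ha b hb
  have hne : (Finset.univ : Finset (Fin n)).Nonempty := by
    have : NeZero n := ⟨by omega⟩
    exact Finset.univ_nonempty
  have hC : 0 ≤ C := le_trans (norm_nonneg _) (hy ⟨0, by omega⟩)
  have hnpos : (0:ℝ) < n := by exact_mod_cast Nat.lt_of_lt_of_le Nat.zero_lt_one hn
  have hwpos : ∀ i z, 0 < w i z := by intro i z; rw [hw]; exact Real.exp_pos _
  have hwle1 : ∀ i z, w i z ≤ 1 := by
    intro i z; rw [hw]; exact Real.exp_le_one_iff.2 (by simpa using norm_nonneg _)
  set Wa := ∑ i, w i a with hWa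
  set Wb := ∑ i, w i b with hWb
  have hWapos : 0 < Wa := Finset.sum_pos (fun i _ => hwpos i a) hne
  have hWbpos : 0 < Wb := Finset.sum_pos (fun i _ => hwpos i b) hne
  have hlow : ∀ z ∈ S, ∀ i, Real.exp (-r) ≤ w i z := by
    intro z hz i
    rw [hw]
    apply Real.exp_le_exp.2
    have := (hS ▸ hz) i
    linarith
  have hWlow : ∀ z ∈ S, (n : ℝ) * Real.exp (-r) ≤ ∑ i, w i z := by
    intro z hz
    calc (n : ℝ) * Real.exp (-r) = ∑ _i : Fin n, Real.exp (-r) := by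
          simp [Finset.sum_const]
      _ ≤ ∑ i, w i z := Finset.sum_le_sum (fun i _ => hlow z hz i)
  have hWalow := hWlow a ha
  have hWblow := hWlow b hb
  have hlip : ∀ i, |w i a - w i b| ≤ ‖a - b‖ := by
    intro i
    rw [hw, hw]
    refine (exp_neg_lip_aux _ _ (norm_nonneg _) (norm_nonneg _)).trans ?_
    have := abs_norm_sub_norm_le (a - x i) (b - x i)
    simpa [sub_sub_sub_cancel_right] using this
  set D := ‖a - b‖ with hD
  have hDnn : 0 ≤ D := norm_nonneg _
  -- key decomposition
  have key : f a - f b = Wa⁻¹ • (∑ i, (w i a - w i b) • y i)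
      + (Wa⁻¹ - Wb⁻¹) • (∑ i, w i b • y i) := by
    rw [hf, hf]
    rw [show (∑ i, (w i a - w i b) • y i) = (∑ i, w i a • y i) - (∑ i, w i b • y i) by
      rw [← Finset.sum_sub_distrib]; congr 1; ext i; rw [sub_smul]]
    rw [smul_sub, sub_smul]
    abel
  have hB : ‖∑ i, w i b • y i‖ ≤ Wb * C := by
    calc ‖∑ i, w i b • y i‖ ≤ ∑ i, ‖w i b • y i‖ := norm_sum_le _ _
      _ ≤ ∑ i, w i b * C := by
          refine Finset.sum_le_sum (fun i _ => ?_)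
          rw [norm_smul, Real.norm_eq_abs, abs_of_pos (hwpos i b)]
          exact mul_le_mul_of_nonneg_left (hy i) (hwpos i b).le
      _ = Wb * C := by rw [← Finset.sum_mul]
  have hA : ‖∑ i, (w i a - w i b) • y i‖ ≤ n * (D * C) := by
    calc ‖∑ i, (w i a - w i b) • y i‖ ≤ ∑ i, ‖(w i a - w i b) • y i‖ := norm_sum_le _ _
      _ ≤ ∑ _i : Fin n, D * C := by
          refine Finset.sum_le_sum (fun i _ => ?_)
          rw [norm_smul, Real.norm_eq_abs]
          exact mul_le_mul (hlip i) (hy i) (norm_nonneg _) hDnn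
      _ = n * (D * C) := by simp [Finset.sum_const, mul_assoc]
  have hWdiff : |Wb - Wa| ≤ n * D := by
    calc |Wb - Wa| = |∑ i, (w i b - w i a)| := by rw [Finset.sum_sub_distrib]
      _ ≤ ∑ i, |w i b - w i a| := Finset.abs_sum_le_sum_abs _ _
      _ ≤ ∑ _i : Fin n, D := Finset.sum_le_sum (fun i _ => by
          rw [abs_sub_comm]; exact hlip i)
      _ = n * D := by simp [Finset.sum_const]
  -- Wa⁻¹ * n ≤ exp r
  have hinv : Wa⁻¹ * n ≤ Real.exp r := by
    have h1 : Wa⁻¹ ≤ ((n : ℝ) * Real.exp (-r))⁻¹ := by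
      apply inv_anti₀ (by positivity) hWalow
    have h2 : ((n : ℝ) * Real.exp (-r))⁻¹ * n = Real.exp r := by
      rw [Real.exp_neg, mul_inv, inv_inv]
      field_simp
    calc Wa⁻¹ * n ≤ ((n : ℝ) * Real.exp (-r))⁻¹ * n :=
          mul_le_mul_of_nonneg_right h1 hnpos.le
      _ = Real.exp r := h2
  -- bound term 1
  have ht1 : ‖Wa⁻¹ • (∑ i, (w i a - w i b) • y i)‖ ≤ Real.exp r * (D * C) := by
    rw [norm_smul, Real.norm_eq_abs, abs_of_pos (inv_pos.2 hWapos)]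
    calc Wa⁻¹ * ‖∑ i, (w i a - w i b) • y i‖ ≤ Wa⁻¹ * (n * (D * C)) :=
          mul_le_mul_of_nonneg_left hA (inv_pos.2 hWapos).le
      _ = (Wa⁻¹ * n) * (D * C) := by ring
      _ ≤ Real.exp r * (D * C) := mul_le_mul_of_nonneg_right hinv (by positivity)
  -- bound term 2
  have ht2 : ‖(Wa⁻¹ - Wb⁻¹) • (∑ i, w i b • y i)‖ ≤ Real.exp r * (D * C) := by
    rw [norm_smul, Real.norm_eq_abs]
    have heq : Wa⁻¹ - Wb⁻¹ = (Wb - Wa) / (Wa * Wb) :=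
      inv_sub_inv hWapos.ne' hWbpos.ne'
    have habs : |Wa⁻¹ - Wb⁻¹| = |Wb - Wa| * (Wa * Wb)⁻¹ := by
      rw [heq, abs_div, abs_of_pos (by positivity : (0:ℝ) < Wa * Wb), div_eq_mul_inv]
    rw [habs]
    calc |Wb - Wa| * (Wa * Wb)⁻¹ * ‖∑ i, w i b • y i‖
        ≤ (n * D) * (Wa * Wb)⁻¹ * (Wb * C) := by
          apply mul_le_mul (mul_le_mul_of_nonneg_right hWdiff (by positivity)) hB
            (norm_nonneg _) (by positivity)
      _ = (Wa⁻¹ * n) * (D * C) * (Wb⁻¹ * Wb) := by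
          rw [mul_inv]; ring
      _ = (Wa⁻¹ * n) * (D * C) := by
          rw [inv_mul_cancel₀ hWbpos.ne', mul_one]
      _ ≤ Real.exp r * (D * C) := mul_le_mul_of_nonneg_right hinv (by positivity)
  calc ‖f a - f b‖ ≤ ‖Wa⁻¹ • (∑ i, (w i a - w i b) • y i)‖
        + ‖(Wa⁻¹ - Wb⁻¹) • (∑ i, w i b • y i)‖ := by
        rw [key]; exact norm_add_le _ _
    _ ≤ Real.exp r * (D * C) + Real.exp r * (D * C) := add_le_add ht1 ht2
    _ = 2 * C * Real.exp r * D := by ring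
end

section
/- Let E and F be real normed vector spaces, n ≥ 1, and let w_1, ..., w_n : E → ℝ be functions differentiable at a point x_0 ∈ E with w_i(x_0) ≥ 0 for all i and W := Σ_{i=1}^n w_i(x_0) > 0. Let y_1, ..., y_n ∈ F with ‖y_i‖ ≤ C. Then f(x) = (Σ_{i=1}^n w_i(x)·y_i)/(Σ_{i=1}^n w_i(x)) is differentiable at x_0 and the operator norm of its Fréchet derivative at x_0 satisfies ‖Df(x_0)‖ ≤ 2·C·(Σ_{i=1}^n ‖Dw_i(x_0)‖)/W. -/
/-!
Write `f = S⁻¹ • T` with `S = ∑ wᵢ` and `T = ∑ wᵢ • yᵢ`. The quotient rule gives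
`Df = S⁻¹ • DT - S⁻² • DS ⊗ T`. Both terms are at most `C · ∑ ‖Dwᵢ‖ / W`: the first because
`DT = ∑ Dwᵢ ⊗ yᵢ`, the second because `‖T(x₀)‖ ≤ C · W` for nonnegative weights.
-/

open Finset

section QuotientRule

variable {𝕜 E F : Type*} [NontriviallyNormedField 𝕜] [NormedAddCommGroup E] [NormedSpace 𝕜 E]
  [NormedAddCommGroup F] [NormedSpace 𝕜 F] {c : E → 𝕜} {g : E → F} {x : E}

theorem fderiv_fun_inv_of_ne_zero (hc : DifferentiableAt 𝕜 c x) (hx : c x ≠ 0) :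
    fderiv 𝕜 (fun y => (c y)⁻¹) x = -(c x ^ 2)⁻¹ • fderiv 𝕜 c x := by
  rw [fderiv_fun_comp x (differentiableAt_inv hx) hc, fderiv_inv]
  ext v
  simp [mul_comm]

theorem norm_fderiv_inv_smul_le (hc : DifferentiableAt 𝕜 c x) (hg : DifferentiableAt 𝕜 g x)
    (hx : c x ≠ 0) :
    ‖fderiv 𝕜 (fun y => (c y)⁻¹ • g y) x‖ ≤
      ‖fderiv 𝕜 g x‖ / ‖c x‖ + ‖fderiv 𝕜 c x‖ * ‖g x‖ / ‖c x‖ ^ 2 := by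
  rw [fderiv_fun_smul (c := fun y => (c y)⁻¹) (hc.inv hx) hg, fderiv_fun_inv_of_ne_zero hc hx]
  refine norm_add_le_of_le ?_ ?_
  · rw [norm_smul, norm_inv, inv_mul_eq_div]
  · rw [ContinuousLinearMap.norm_smulRight_apply, norm_smul, norm_neg, norm_inv, norm_pow]
    exact le_of_eq (by ring)

end QuotientRule

theorem norm_sum_smul_le_of_nonneg {ι F : Type*} [NormedAddCommGroup F] [NormedSpace ℝ F]
    {s : Finset ι} {a : ι → ℝ} {y : ι → F} {C : ℝ}
    (ha : ∀ i ∈ s, 0 ≤ a i) (hy : ∀ i ∈ s, ‖y i‖ ≤ C) :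
    ‖∑ i ∈ s, a i • y i‖ ≤ (∑ i ∈ s, a i) * C := by
  rw [sum_mul]
  refine norm_sum_le_of_le s fun i hi => ?_
  rw [norm_smul, Real.norm_of_nonneg (ha i hi)]
  exact mul_le_mul_of_nonneg_left (hy i hi) (ha i hi)

section WeightedSums

variable {ι 𝕜 E F : Type*} [NontriviallyNormedField 𝕜] [NormedAddCommGroup E]
  [NormedSpace 𝕜 E] [NormedAddCommGroup F] [NormedSpace 𝕜 F]

theorem norm_fderiv_sum_le {s : Finset ι} {w : ι → E → F} {x : E}
    (hw : ∀ i ∈ s, DifferentiableAt 𝕜 (w i) x) :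
    ‖fderiv 𝕜 (fun y => ∑ i ∈ s, w i y) x‖ ≤ ∑ i ∈ s, ‖fderiv 𝕜 (w i) x‖ := by
  rw [fderiv_fun_sum hw]
  exact norm_sum_le _ _

theorem norm_fderiv_sum_smul_const_le {s : Finset ι} {w : ι → E → 𝕜} {y : ι → F} {C : ℝ}
    {x : E} (hw : ∀ i ∈ s, DifferentiableAt 𝕜 (w i) x) (hy : ∀ i ∈ s, ‖y i‖ ≤ C) :
    ‖fderiv 𝕜 (fun z => ∑ i ∈ s, w i z • y i) x‖ ≤ C * ∑ i ∈ s, ‖fderiv 𝕜 (w i) x‖ := by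
  rw [fderiv_fun_sum fun i hi => (hw i hi).smul_const (y i), mul_sum]
  refine norm_sum_le_of_le s fun i hi => ?_
  rw [fderiv_smul_const (hw i hi), ContinuousLinearMap.norm_smulRight_apply, mul_comm]
  exact mul_le_mul_of_nonneg_right (hy i hi) (norm_nonneg _)

end WeightedSums

theorem weighted_average_fderiv_bound_general
    {E F : Type*} [NormedAddCommGroup E] [NormedSpace ℝ E]
    [NormedAddCommGroup F] [NormedSpace ℝ F]
    (n : ℕ)
    (w : Fin n → E → ℝ) (x₀ : E)
    (hdiff : ∀ i, DifferentiableAt ℝ (w i) x₀)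
    (hnonneg : ∀ i, 0 ≤ w i x₀)
    (W : ℝ) (hW : W = ∑ i, w i x₀) (hWpos : 0 < W)
    (y : Fin n → F) (C : ℝ) (hy : ∀ i, ‖y i‖ ≤ C)
    (f : E → F) (hf : ∀ x, f x = (∑ i, w i x)⁻¹ • (∑ i, w i x • y i)) :
    DifferentiableAt ℝ f x₀ ∧
      ‖fderiv ℝ f x₀‖ ≤ 2 * C * (∑ i, ‖fderiv ℝ (w i) x₀‖) / W := by
  subst hW
  obtain rfl : f = fun x => (∑ i, w i x)⁻¹ • ∑ i, w i x • y i := funext hf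
  have hS : DifferentiableAt ℝ (fun x => ∑ i, w i x) x₀ := .fun_sum fun i _ => hdiff i
  have hT : DifferentiableAt ℝ (fun x => ∑ i, w i x • y i) x₀ :=
    .fun_sum fun i _ => (hdiff i).smul_const (y i)
  set W := ∑ i, w i x₀
  set A := ∑ i, ‖fderiv ℝ (w i) x₀‖
  refine ⟨(hS.inv hWpos.ne').smul hT, ?_⟩
  have hTx : ‖∑ i, w i x₀ • y i‖ ≤ W * C :=
    norm_sum_smul_le_of_nonneg (fun i _ => hnonneg i) fun i _ => hy i
  calc _ ≤ _ := norm_fderiv_inv_smul_le hS hT hWpos.ne'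
    _ ≤ C * A / W + A * (W * C) / W ^ 2 := by
      rw [Real.norm_of_nonneg hWpos.le]
      gcongr
      · exact norm_fderiv_sum_smul_const_le (fun i _ => hdiff i) fun i _ => hy i
      · exact norm_fderiv_sum_le fun i _ => hdiff i
    _ = 2 * C * A / W := by field_simp; ring

/-- Differential form of the gradient bound in the paper's Theorem 1: the
weighted average of embeddings with nonnegative differentiable weights is
differentiable, with Fréchet derivative bounded in operator norm by
`2·C·(∑ ‖Dw i‖)/W`. -/
theorem weighted_average_fderiv_bound
    {E F : Type*} [NormedAddCommGroup E] [NormedSpace ℝ E]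
    [NormedAddCommGroup F] [NormedSpace ℝ F]
    (n : ℕ) (hn : 1 ≤ n)
    (w : Fin n → E → ℝ) (x₀ : E)
    (hdiff : ∀ i, DifferentiableAt ℝ (w i) x₀)
    (hnonneg : ∀ i, 0 ≤ w i x₀)
    (W : ℝ) (hW : W = ∑ i, w i x₀) (hWpos : 0 < W)
    (y : Fin n → F) (C : ℝ) (hy : ∀ i, ‖y i‖ ≤ C)
    (f : E → F) (hf : ∀ x, f x = (∑ i, w i x)⁻¹ • (∑ i, w i x • y i)) :
    DifferentiableAt ℝ f x₀ ∧
      ‖fderiv ℝ f x₀‖ ≤ 2 * C * (∑ i, ‖fderiv ℝ (w i) x₀‖) / W :=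
  weighted_average_fderiv_bound_general n w x₀ hdiff hnonneg W hW hWpos y C hy f hf
end
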